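/- A symmetric tensor A of order m and dimension n is strictly copositive if and only if no principal sub-tensor of A has a non-positive H^{++}-eigenvalue, i.e., no principal sub-tensor B admits λ ≤ 0 and a strictly positive vector v with B v^{m-1} = λ v^{[m-1]}. -/

import Mathlib

open Finset

/-- `A x^m` for an `m`-order `n`-dimensional tensor `A`. -/
noncomputable def tpow {m n : ℕ} (A : (Fin m → Fin n) → ℝ) (x : Fin n → ℝ) : ℝ :=
  ∑ f : Fin m → Fin n, A f * ∏ k, x (f k)

/-- `A` is symmetric: entries invariant under permutations of indices. -/
def SymT {m n : ℕ} (A : (Fin m → Fin n) → ℝ) : Prop :=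
  ∀ (σ : Equiv.Perm (Fin m)) (f : Fin m → Fin n), A (f ∘ σ) = A f

/-- `A` is copositive. -/
def CoposT {m n : ℕ} (A : (Fin m → Fin n) → ℝ) : Prop :=
  ∀ x : Fin n → ℝ, (∀ i, 0 ≤ x i) → 0 ≤ tpow A x

/-- `A` is strictly copositive. -/
def StrictCoposT {m n : ℕ} (A : (Fin m → Fin n) → ℝ) : Prop :=
  ∀ x : Fin n → ℝ, (∀ i, 0 ≤ x i) → x ≠ 0 → 0 < tpow A x

/-- `(A_S x^{m-1})_i` : the `i`-th component of the contraction of the principal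
sub-tensor of `A` on the index set `S` with `x` taken `m-1` times. -/
noncomputable def tcontr {m n : ℕ} (hm : 0 < m) (A : (Fin m → Fin n) → ℝ)
    (S : Finset (Fin n)) (x : Fin n → ℝ) (i : Fin n) : ℝ :=
  ∑ f ∈ Finset.univ.filter
      (fun f : Fin m → Fin n => f ⟨0, hm⟩ = i ∧ ∀ k, f k ∈ S),
    A f * ∏ k ∈ Finset.univ.erase (⟨0, hm⟩ : Fin m), x (f k)

/-! If a principal sub-tensor `A_S` has an H⁺⁺-eigenpair `(λ, v)` with `λ ≤ 0`, extending `v` by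
zero gives a nonzero `x ≥ 0` with `A x^m = ∑ i, x i (A_S x^{m-1})_i = λ ∑_{i ∈ S} v_i^m ≤ 0`.

Conversely, if `A` is not strictly copositive, a minimiser `y` of `A x^m` on the compact set
`{x ≥ 0, ∑ x_i^m = 1}` has value `λ ≤ 0`, and by homogeneity `A w^m - λ ∑ w_i^m ≥ 0` on the whole
orthant, with equality at `y`. For `i` in the support `S` of `y` the line `y + t e_i` stays in the
orthant for small `|t|`, so the `i`-th partial derivative vanishes at `y`; by symmetry of `A` it
equals `m ((A y^{m-1})_i - λ y_i^{m-1})`, and `(A y^{m-1})_i = (A_S y^{m-1})_i` as `y` vanishes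
off `S`. -/

variable {m n : ℕ}

lemma tpow_smul (A : (Fin m → Fin n) → ℝ) (c : ℝ) (x : Fin n → ℝ) :
    tpow A (c • x) = c ^ m * tpow A x := by
  simp only [tpow, Pi.smul_apply, smul_eq_mul, Finset.prod_mul_distrib, Finset.prod_const,
    Finset.card_univ, Fintype.card_fin, Finset.mul_sum]
  exact Finset.sum_congr rfl fun f _ => by ring

lemma tpow_zero (hm : 0 < m) (A : (Fin m → Fin n) → ℝ) : tpow A 0 = 0 := by
  simpa [zero_pow hm.ne'] using tpow_smul A 0 0

lemma continuous_tpow (A : (Fin m → Fin n) → ℝ) : Continuous (tpow A) := by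
  unfold tpow
  fun_prop

lemma tpow_eq_sum_mul_tcontr (hm : 0 < m) (A : (Fin m → Fin n) → ℝ) (x : Fin n → ℝ) :
    tpow A x = ∑ i, x i * tcontr hm A univ x i := by
  rw [tpow, ← Finset.sum_fiberwise (g := fun f : Fin m → Fin n => f ⟨0, hm⟩)]
  refine Finset.sum_congr rfl fun i _ => ?_
  simp only [tcontr, Finset.mem_univ, implies_true, and_true, Finset.mul_sum]
  refine Finset.sum_congr rfl fun f hf => ?_
  rw [(Finset.mem_filter.mp hf).2.symm, ← Finset.mul_prod_erase _ _ (Finset.mem_univ _)]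
  ring

lemma tcontr_congr (hm : 0 < m) (A : (Fin m → Fin n) → ℝ) (S : Finset (Fin n))
    {x y : Fin n → ℝ} (h : ∀ j ∈ S, x j = y j) : tcontr hm A S x = tcontr hm A S y := by
  funext i
  refine Finset.sum_congr rfl fun f hf => ?_
  exact congrArg _ <| Finset.prod_congr rfl fun k _ => h _ ((Finset.mem_filter.mp hf).2.2 k)

lemma tcontr_eq_tcontr_univ (hm : 0 < m) (A : (Fin m → Fin n) → ℝ) {S : Finset (Fin n)}
    {x : Fin n → ℝ} (hx : ∀ j ∉ S, x j = 0) {i : Fin n} (hi : i ∈ S) :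
    tcontr hm A S x i = tcontr hm A univ x i := by
  refine Finset.sum_subset (fun f hf => ?_) fun f hf hfS => ?_
  · simp_all
  · simp only [Finset.mem_filter, Finset.mem_univ, true_and, not_and, not_forall] at hf hfS
    obtain ⟨k, hk⟩ := hfS hf.1
    have hk0 : k ≠ ⟨0, hm⟩ := by rintro rfl; exact hk (hf.1 ▸ hi)
    rw [Finset.prod_eq_zero (Finset.mem_erase.mpr ⟨hk0, Finset.mem_univ k⟩) (hx _ hk), mul_zero]

lemma tpow_piecewise_eq_mul_sum_pow (hm : 0 < m) (A : (Fin m → Fin n) → ℝ) {S : Finset (Fin n)}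
    {lam : ℝ} {v : Fin n → ℝ} (heig : ∀ i ∈ S, tcontr hm A S v i = lam * v i ^ (m - 1)) :
    tpow A (S.piecewise v 0) = lam * ∑ i ∈ S, v i ^ m := by
  rw [tpow_eq_sum_mul_tcontr hm, ← Finset.sum_subset (Finset.subset_univ S)
    fun i _ hi => by simp [hi], Finset.mul_sum]
  refine Finset.sum_congr rfl fun i hi => ?_
  rw [← tcontr_eq_tcontr_univ hm A (fun j hj => S.piecewise_eq_of_notMem _ _ hj) hi,
    tcontr_congr hm A S (fun j hj => S.piecewise_eq_of_mem _ _ hj), heig i hi,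
    S.piecewise_eq_of_mem _ _ hi, ← Nat.sub_add_cancel hm, pow_succ, Nat.add_sub_cancel]
  ring

lemma SymT.sum_slot_eq_tcontr_univ (hm : 0 < m) {A : (Fin m → Fin n) → ℝ} (hA : SymT A)
    (x : Fin n → ℝ) (i : Fin n) (k : Fin m) :
    ∑ f with f k = i, A f * ∏ j ∈ univ.erase k, x (f j) = tcontr hm A univ x i := by
  set σ := Equiv.swap (⟨0, hm⟩ : Fin m) k
  simp only [tcontr, Finset.mem_univ, implies_true, and_true]
  refine Finset.sum_nbij' (· ∘ σ) (· ∘ σ) (by simp [σ]) (by simp [σ])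
    (fun f _ => by ext; simp [σ]) (fun f _ => by ext; simp [σ]) fun f _ => ?_
  rw [hA]
  congr 1
  have hσ : (univ.erase (⟨0, hm⟩ : Fin m)).map σ.toEmbedding = univ.erase k := by
    rw [Finset.map_erase, Finset.map_univ_equiv]
    simp [σ]
  rw [← hσ, Finset.prod_map]
  rfl

lemma hasDerivAt_tpow_add_smul (A : (Fin m → Fin n) → ℝ) (x d : Fin n → ℝ) :
    HasDerivAt (fun t : ℝ => tpow A (x + t • d))
      (∑ f, A f * ∑ k, (∏ j ∈ univ.erase k, x (f j)) * d (f k)) 0 := by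
  unfold tpow
  refine HasDerivAt.fun_sum fun f _ => HasDerivAt.const_mul _ ?_
  have hline : ∀ k, HasDerivAt (fun t : ℝ => (x + t • d) (f k)) (d (f k)) 0 := fun k => by
    simpa using ((hasDerivAt_id (0 : ℝ)).mul_const (d (f k))).const_add (x (f k))
  simpa using HasDerivAt.fun_finsetProd fun k (_ : k ∈ univ) => hline k

lemma SymT.hasDerivAt_tpow_add_smul_single (hm : 0 < m) {A : (Fin m → Fin n) → ℝ} (hA : SymT A)
    (x : Fin n → ℝ) (i : Fin n) :
    HasDerivAt (fun t : ℝ => tpow A (x + t • Pi.single i 1)) (m * tcontr hm A univ x i) 0 := by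
  convert hasDerivAt_tpow_add_smul A x (Pi.single i 1) using 1
  calc (m : ℝ) * tcontr hm A univ x i
      = ∑ k : Fin m, ∑ f with f k = i, A f * ∏ j ∈ univ.erase k, x (f j) := by
        simp [hA.sum_slot_eq_tcontr_univ hm]
    _ = _ := by
        simp only [Finset.mul_sum, Finset.sum_filter]
        conv_rhs => rw [Finset.sum_comm]
        refine Finset.sum_congr rfl fun k _ => Finset.sum_congr rfl fun f _ => ?_
        by_cases h : f k = i <;> simp [h]

lemma hasDerivAt_sum_pow_add_smul (x d : Fin n → ℝ) :
    HasDerivAt (fun t : ℝ => ∑ j, (x + t • d) j ^ m) (∑ j, m * x j ^ (m - 1) * d j) 0 := by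
  refine HasDerivAt.fun_sum fun j _ => ?_
  simpa using (((hasDerivAt_id (0 : ℝ)).mul_const (d j)).const_add (x j)).fun_pow m

lemma isCompact_nonneg_sum_pow_eq_one (hm : 0 < m) :
    IsCompact {y : Fin n → ℝ | (∀ i, 0 ≤ y i) ∧ ∑ i, y i ^ m = 1} := by
  refine (isCompact_Icc (a := 0) (b := 1)).of_isClosed_subset ?_
    fun y ⟨hy0, hy1⟩ => ⟨hy0, fun i => ?_⟩
  · simp only [Set.ofPred_and, Set.ofPred_forall]
    exact (isClosed_iInter fun i => isClosed_le continuous_const (continuous_apply i)).inter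
      (isClosed_eq (by fun_prop) continuous_const)
  · refine (pow_le_one_iff_of_nonneg (hy0 i) hm.ne').mp ?_
    exact hy1 ▸ Finset.single_le_sum (fun j _ => pow_nonneg (hy0 j) m) (Finset.mem_univ i)

lemma exists_forall_mul_sum_pow_le_tpow (hm : 0 < m) [Nonempty (Fin n)]
    (A : (Fin m → Fin n) → ℝ) :
    ∃ y : Fin n → ℝ, (∀ i, 0 ≤ y i) ∧ ∑ i, y i ^ m = 1 ∧
      ∀ w : Fin n → ℝ, (∀ i, 0 ≤ w i) → tpow A y * ∑ i, w i ^ m ≤ tpow A w := by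
  obtain ⟨i₀⟩ := ‹Nonempty (Fin n)›
  have hne : {y : Fin n → ℝ | (∀ i, 0 ≤ y i) ∧ ∑ i, y i ^ m = 1}.Nonempty :=
    ⟨Pi.single i₀ 1, fun i => by rw [Pi.single_apply]; split_ifs <;> norm_num,
      by simp [Pi.single_apply, zero_pow hm.ne']⟩
  obtain ⟨y, ⟨hy0, hy1⟩, hmin⟩ :=
    (isCompact_nonneg_sum_pow_eq_one hm).exists_isMinOn hne (continuous_tpow A).continuousOn
  refine ⟨y, hy0, hy1, fun w hw0 => ?_⟩
  set s := ∑ i, w i ^ m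
  rcases (Finset.sum_nonneg fun i _ => pow_nonneg (hw0 i) m : 0 ≤ s).eq_or_lt with hs | hs
  · have hw : w = 0 := funext fun i =>
      pow_eq_zero_iff hm.ne' |>.mp <| (Finset.sum_eq_zero_iff_of_nonneg
        fun j _ => pow_nonneg (hw0 j) m).mp hs.symm i (Finset.mem_univ i)
    rw [show s = 0 from hs.symm, hw, tpow_zero hm, mul_zero]
  set c := s⁻¹ ^ ((m : ℝ)⁻¹)
  have hc0 : 0 ≤ c := Real.rpow_nonneg (inv_nonneg.mpr hs.le) _
  have hcm : c ^ m = s⁻¹ := Real.rpow_inv_natCast_pow (inv_nonneg.mpr hs.le) hm.ne'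
  have hcw : c • w ∈ {y : Fin n → ℝ | (∀ i, 0 ≤ y i) ∧ ∑ i, y i ^ m = 1} :=
    ⟨fun i => mul_nonneg hc0 (hw0 i), by
      simp only [Pi.smul_apply, smul_eq_mul, mul_pow, ← Finset.mul_sum, hcm]
      exact inv_mul_cancel₀ hs.ne'⟩
  have hle := hmin hcw
  rwa [Set.mem_ofPred_eq, tpow_smul, hcm, le_inv_mul_iff₀ hs, mul_comm] at hle

lemma SymT.tcontr_univ_eq_of_forall_mul_sum_pow_le_tpow (hm : 0 < m) {A : (Fin m → Fin n) → ℝ}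
    (hA : SymT A) {lam : ℝ} {y : Fin n → ℝ} (hy0 : ∀ i, 0 ≤ y i)
    (hmin : ∀ w : Fin n → ℝ, (∀ i, 0 ≤ w i) → lam * ∑ i, w i ^ m ≤ tpow A w)
    (hy : tpow A y = lam * ∑ i, y i ^ m) {i : Fin n} (hi : 0 < y i) :
    tcontr hm A univ y i = lam * y i ^ (m - 1) := by
  set e : Fin n → ℝ := Pi.single i 1
  set g : ℝ → ℝ := fun t => tpow A (y + t • e) - lam * ∑ j, (y + t • e) j ^ m
  have hg : IsLocalMin g 0 := by
    filter_upwards [eventually_gt_nhds (neg_neg_of_pos hi)] with t ht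
    have hw0 : ∀ j, 0 ≤ (y + t • e) j := fun j => by
      by_cases h : j = i
      · simp only [e, h, Pi.add_apply, Pi.smul_apply, Pi.single_eq_same, smul_eq_mul, mul_one]
        linarith
      · simp [e, h, hy0 j]
    simpa [g, hy] using hmin _ hw0
  have hderiv : HasDerivAt g (m * tcontr hm A univ y i - lam * (m * y i ^ (m - 1))) 0 := by
    refine ((hA.hasDerivAt_tpow_add_smul_single hm y i).fun_sub
      ((hasDerivAt_sum_pow_add_smul (m := m) y e).const_mul lam)).congr_deriv ?_
    simp [e, Pi.single_apply]
  have hcrit : (m : ℝ) * (tcontr hm A univ y i - lam * y i ^ (m - 1)) = 0 := by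
    rw [← hg.hasDerivAt_eq_zero hderiv]
    ring
  exact sub_eq_zero.mp <| (mul_eq_zero.mp hcrit).resolve_left (Nat.cast_ne_zero.mpr hm.ne')

lemma exists_minimizer_of_not_strictCoposT (hm : 0 < m) {A : (Fin m → Fin n) → ℝ}
    (h : ¬ StrictCoposT A) :
    ∃ y : Fin n → ℝ, (∀ i, 0 ≤ y i) ∧ ∑ i, y i ^ m = 1 ∧ tpow A y ≤ 0 ∧
      ∀ w : Fin n → ℝ, (∀ i, 0 ≤ w i) → tpow A y * ∑ i, w i ^ m ≤ tpow A w := by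
  obtain ⟨x, hx0, hx, hxA⟩ : ∃ x : Fin n → ℝ, (∀ i, 0 ≤ x i) ∧ x ≠ 0 ∧ tpow A x ≤ 0 := by
    simpa [StrictCoposT] using h
  obtain ⟨i₀, hi₀⟩ := Function.ne_iff.mp hx
  have : Nonempty (Fin n) := ⟨i₀⟩
  obtain ⟨y, hy0, hy1, hmin⟩ := exists_forall_mul_sum_pow_le_tpow hm A
  have hxsum : 0 < ∑ i, x i ^ m := Finset.sum_pos' (fun i _ => pow_nonneg (hx0 i) m)
    ⟨i₀, Finset.mem_univ _, pow_pos ((hx0 i₀).lt_of_ne' hi₀) m⟩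
  exact ⟨y, hy0, hy1, by nlinarith [hmin x hx0], hmin⟩

theorem stmt8 {m n : ℕ} (hm : 0 < m) (A : (Fin m → Fin n) → ℝ) (hA : SymT A) :
    StrictCoposT A ↔
      ¬ ∃ (S : Finset (Fin n)) (lam : ℝ) (v : Fin n → ℝ),
        S.Nonempty ∧ lam ≤ 0 ∧ (∀ i ∈ S, 0 < v i) ∧
        ∀ i ∈ S, tcontr hm A S v i = lam * v i ^ (m - 1) := by
  constructor
  · rintro hcop ⟨S, lam, v, ⟨i, hi⟩, hlam, hv, heig⟩
    have hpos := hcop (S.piecewise v 0)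
      (fun j => by by_cases hj : j ∈ S <;> simp [hj, (hv j _).le])
      (fun h => (hv i hi).ne' (by simpa [hi] using congrFun h i))
    have hsum : 0 < ∑ j ∈ S, v j ^ m := Finset.sum_pos (fun j hj => pow_pos (hv j hj) m) ⟨i, hi⟩
    rw [tpow_piecewise_eq_mul_sum_pow hm A heig] at hpos
    nlinarith
  · intro hno
    by_contra hcop
    obtain ⟨y, hy0, hy1, hyA, hmin⟩ := exists_minimizer_of_not_strictCoposT hm hcop
    refine hno ⟨univ.filter (0 < y ·), tpow A y, y, ?_, hyA, fun i hi => by simpa using hi,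
      fun i hi => ?_⟩
    · obtain ⟨i, -, hi⟩ := Finset.exists_ne_zero_of_sum_ne_zero (hy1 ▸ one_ne_zero)
      exact ⟨i, by simpa using (hy0 i).lt_of_ne' fun h => hi (by simp [h, zero_pow hm.ne'])⟩
    · rw [tcontr_eq_tcontr_univ hm A (fun j hj => by simpa [(hy0 j).ge_iff_eq'] using hj) hi]
      exact hA.tcontr_univ_eq_of_forall_mul_sum_pow_le_tpow hm hy0 hmin (by rw [hy1, mul_one])
        (by simpa using hi)
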